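/- arXiv:2109.10220 — 5 statements merged into one kernel-verified Lean document; each statement's English description precedes it below -/
import Mathlib

section
/- Let p be a prime with p ≡ 1 (mod 4) and let m be an integer such that p divides m² + 1. Then there exist integers a, b, c, d with a·d − b·c = 1 such that (a·i + b)/(c·i + d) = (m + i)/p as complex numbers. -/
open Complex

theorem equiv_to_i (p : ℕ) (hp : p.Prime) (h : p % 4 = 1) (m : ℤ)
    (hdvd : (p : ℤ) ∣ m ^ 2 + 1) :
    ∃ a b c d : ℤ, a * d - b * c = 1 ∧
      ((a : ℂ) * I + (b : ℂ)) / ((c : ℂ) * I + (d : ℂ)) = ((m : ℂ) + I) / (p : ℂ) := by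
  have hp4 : p % 4 ≠ 3 := by omega
  haveI : Fact p.Prime := ⟨hp⟩
  obtain ⟨x, y, hxy⟩ := Nat.Prime.sq_add_sq hp4
  -- choose c, d with c² + d² = p and p ∣ c - m*d
  have key : ∃ c d : ℤ, c ^ 2 + d ^ 2 = (p : ℤ) ∧ (p : ℤ) ∣ c - m * d := by
    have hsum : ((x : ℤ)) ^ 2 + (y : ℤ) ^ 2 = (p : ℤ) := by exact_mod_cast hxy
    have hdiv : (p : ℤ) ∣ ((x : ℤ) - m * y) * ((x : ℤ) + m * y) := by
      obtain ⟨q, hq⟩ := hdvd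
      refine ⟨1 - q * (y : ℤ) ^ 2, ?_⟩
      linear_combination hsum - (y:ℤ)^2 * hq
    rcases (Int.Prime.dvd_mul' (by exact_mod_cast hp) hdiv) with h1 | h1
    · exact ⟨(x : ℤ), (y : ℤ), hsum, h1⟩
    · exact ⟨-(x : ℤ), (y : ℤ), by linear_combination hsum, by
        obtain ⟨q, hq⟩ := h1; exact ⟨-q, by linear_combination -hq⟩⟩
  obtain ⟨c, d, hcd, hdvd2⟩ := key
  have ha' : (p : ℤ) ∣ m * c + d := by
    obtain ⟨q, hq⟩ := hdvd2
    obtain ⟨r, hr⟩ := hdvd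
    exact ⟨m * q + r * d, by linear_combination m * hq + d * hr⟩
  have hb' : (p : ℤ) ∣ m * d - c := by
    obtain ⟨q, hq⟩ := hdvd2
    exact ⟨-q, by linear_combination -hq⟩
  obtain ⟨a, ha⟩ := ha'
  obtain ⟨b, hb⟩ := hb'
  have hp0 : (p : ℤ) ≠ 0 := by exact_mod_cast hp.ne_zero
  refine ⟨a, b, c, d, ?_, ?_⟩
  · have : (p : ℤ) * (a * d - b * c) = (p : ℤ) * 1 := by
      linear_combination -d * ha + c * hb + hcd
    exact mul_left_cancel₀ hp0 this
  · have hpC : (p : ℂ) ≠ 0 := by exact_mod_cast hp.ne_zero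
    have hden : ((c : ℂ) * I + (d : ℂ)) ≠ 0 := by
      intro h0
      have : ((c : ℂ) * I + d) * (-(c : ℂ) * I + d) = (p : ℂ) := by
        have : ((c : ℤ)^2 + d^2 : ℤ) = (p : ℤ) := hcd
        have hC : ((c : ℂ))^2 + (d : ℂ)^2 = (p : ℂ) := by exact_mod_cast this
        linear_combination hC - (c:ℂ)^2 * I_sq
      rw [h0, zero_mul] at this
      exact hpC this.symm
    rw [div_eq_div_iff hden hpC]
    have haC : (m : ℂ) * c + d = (p : ℂ) * a := by exact_mod_cast ha
    have hbC : (m : ℂ) * d - c = (p : ℂ) * b := by exact_mod_cast hb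
    linear_combination -I * haC - hbC - (c:ℂ) * I_sq
end

section
/- Let A be a 2×2 integer matrix with determinant 1 and trace 0, and let S = [[0, −1], [1, 0]]. Then there exists a 2×2 integer matrix B with determinant 1 such that B·A·B⁻¹ = S or B·A·B⁻¹ = −S. -/
/-- If `B` has unit determinant and `B * A = C * B`, then `B * A * B⁻¹ = C`. -/
private lemma conj_of {B A C : Matrix (Fin 2) (Fin 2) ℤ} (hB : B.det = 1)
    (h : B * A = C * B) : B * A * B⁻¹ = C := by
  have hu : IsUnit B.det := by rw [hB]; exact isUnit_one
  rw [h, Matrix.mul_nonsing_inv_cancel_right _ _ hu]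

private lemma conj_trans (B₁ B₂ A : Matrix (Fin 2) (Fin 2) ℤ) :
    (B₂ * B₁) * A * (B₂ * B₁)⁻¹ = B₂ * (B₁ * A * B₁⁻¹) * B₂⁻¹ := by
  rw [Matrix.mul_inv_rev]
  simp only [Matrix.mul_assoc]

private lemma key : ∀ n : ℕ, 0 < n → ∀ a b : ℤ, a ^ 2 + b * (n : ℤ) = -1 →
    ∃ B : Matrix (Fin 2) (Fin 2) ℤ, B.det = 1 ∧
      B * !![a, b; (n : ℤ), -a] * B⁻¹ = !![(0 : ℤ), -1; 1, 0] := by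
  intro n
  induction n using Nat.strong_induction_on with
  | _ n ih =>
    intro hn a b hbc
    have hcpos : (0 : ℤ) < (n : ℤ) := by exact_mod_cast hn
    set c : ℤ := (n : ℤ) with hcn
    -- conjugate by T = !![1, m; 0, 1] with m = -(a / c)
    set m : ℤ := -(a / c) with hm
    clear_value m
    set a' : ℤ := a + m * c with ha'
    clear_value a'
    have ha'mod : a' = a % c := by rw [ha', hm, Int.emod_def]; ring
    have ha'0 : 0 ≤ a' := ha'mod ▸ Int.emod_nonneg a (ne_of_gt hcpos)
    have ha'lt : a' < c := ha'mod ▸ Int.emod_lt_of_pos a hcpos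
    set b' : ℤ := b - 2 * m * a - m ^ 2 * c with hb'
    clear_value b'
    have hbc' : a' ^ 2 + b' * c = -1 := by rw [ha', hb']; nlinarith [hbc]
    have hTdet : (!![(1 : ℤ), m; 0, 1]).det = 1 := by
      rw [Matrix.det_fin_two_of]; ring
    have hconjT : !![(1 : ℤ), m; 0, 1] * !![a, b; c, -a] * (!![(1 : ℤ), m; 0, 1])⁻¹ =
        !![a', b'; c, -a'] := by
      apply conj_of hTdet
      ext i j
      fin_cases i <;> fin_cases j <;>
        simp [Matrix.mul_apply, Fin.sum_univ_two, ha', hb'] <;> ring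
    rcases eq_or_lt_of_le (show (1 : ℤ) ≤ c from hcpos) with h1 | h2
    · -- c = 1 : then a' = 0, b' = -1
      have ha'eq : a' = 0 := by omega
      have hb'eq : b' = -1 := by nlinarith [hbc']
      refine ⟨!![(1 : ℤ), m; 0, 1], hTdet, ?_⟩
      rw [hconjT, ha'eq, hb'eq, ← h1]
      norm_num
    · -- c ≥ 2 : conjugate further by S, reducing the lower-left entry
      have hSdet : (!![(0 : ℤ), -1; 1, 0]).det = 1 := by
        rw [Matrix.det_fin_two_of]; ring
      set c₂ : ℤ := -b' with hc₂
      clear_value c₂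
      have hc₂c : c₂ * c = 1 + a' ^ 2 := by rw [hc₂]; linarith [hbc']
      have hc₂pos : 0 < c₂ := by nlinarith [sq_nonneg a']
      have hc₂lt : c₂ < c := by nlinarith [sq_nonneg (a' - (c - 1))]
      have hconjS : !![(0 : ℤ), -1; 1, 0] * !![a', b'; c, -a'] *
          (!![(0 : ℤ), -1; 1, 0])⁻¹ = !![-a', -c; c₂, a'] := by
        apply conj_of hSdet
        ext i j
        fin_cases i <;> fin_cases j <;>
          simp [Matrix.mul_apply, Fin.sum_univ_two, hc₂]
      have hlt : c₂.toNat < n := by omega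
      have hpos : 0 < c₂.toNat := by omega
      have hcast : ((c₂.toNat : ℕ) : ℤ) = c₂ := Int.toNat_of_nonneg hc₂pos.le
      have hbc₂ : (-a') ^ 2 + (-c) * ((c₂.toNat : ℕ) : ℤ) = -1 := by
        rw [hcast]; nlinarith [hc₂c]
      obtain ⟨B₀, hB₀det, hB₀⟩ := ih c₂.toNat hlt hpos (-a') (-c) hbc₂
      rw [hcast] at hB₀
      have hB₀' : B₀ * !![-a', -c; c₂, a'] * B₀⁻¹ = !![(0 : ℤ), -1; 1, 0] := by
        have : !![-a', -c; c₂, -(-a')] = !![-a', -c; c₂, a'] := by norm_num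
        rw [← this]; exact hB₀
      refine ⟨B₀ * (!![(0 : ℤ), -1; 1, 0] * !![(1 : ℤ), m; 0, 1]), ?_, ?_⟩
      · rw [Matrix.det_mul, Matrix.det_mul, hB₀det, hSdet, hTdet]; ring
      · rw [conj_trans, conj_trans, hconjT, hconjS, hB₀']

theorem conjugate_to_S (A : Matrix (Fin 2) (Fin 2) ℤ)
    (hdet : A.det = 1) (htr : A.trace = 0) :
    ∃ B : Matrix (Fin 2) (Fin 2) ℤ, B.det = 1 ∧
      (B * A * B⁻¹ = !![(0 : ℤ), -1; 1, 0] ∨ B * A * B⁻¹ = -!![(0 : ℤ), -1; 1, 0]) := by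
  have hd : A 1 1 = -A 0 0 := by
    have h := Matrix.trace_fin_two A
    rw [htr] at h; linarith [h.symm]
  have hbc : A 0 0 ^ 2 + A 0 1 * A 1 0 = -1 := by
    have h := Matrix.det_fin_two A
    rw [hdet, hd] at h; nlinarith [h]
  have hcne : A 1 0 ≠ 0 := by
    intro h; rw [h] at hbc; nlinarith [sq_nonneg (A 0 0)]
  have hAeta : A = !![A 0 0, A 0 1; A 1 0, A 1 1] := Matrix.eta_fin_two A
  rcases lt_or_gt_of_ne hcne with hneg | hpos
  · -- A 1 0 < 0 : apply key to -A
    have hcast : (((-A 1 0).toNat : ℕ) : ℤ) = -A 1 0 :=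
      Int.toNat_of_nonneg (by omega)
    have hpos' : 0 < (-A 1 0).toNat := by omega
    have hbc' : (-A 0 0) ^ 2 + (-A 0 1) * (((-A 1 0).toNat : ℕ) : ℤ) = -1 := by
      rw [hcast]; nlinarith [hbc]
    obtain ⟨B, hBdet, hB⟩ := key (-A 1 0).toNat hpos' (-A 0 0) (-A 0 1) hbc'
    rw [hcast] at hB
    have hnegA : !![-A 0 0, -A 0 1; -A 1 0, -(-A 0 0)] = -A := by
      ext i j; fin_cases i <;> fin_cases j <;> simp [hd]
    rw [hnegA] at hB
    refine ⟨B, hBdet, Or.inr ?_⟩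
    have h2 : -(B * A * B⁻¹) = !![(0 : ℤ), -1; 1, 0] := by
      rw [← hB, Matrix.mul_neg, Matrix.neg_mul]
    rw [← neg_neg (B * A * B⁻¹), h2]
  · have hcast : (((A 1 0).toNat : ℕ) : ℤ) = A 1 0 := Int.toNat_of_nonneg hpos.le
    have hpos' : 0 < (A 1 0).toNat := by omega
    have hbc' : (A 0 0) ^ 2 + (A 0 1) * (((A 1 0).toNat : ℕ) : ℤ) = -1 := by
      rw [hcast]; nlinarith [hbc]
    obtain ⟨B, hBdet, hB⟩ := key (A 1 0).toNat hpos' (A 0 0) (A 0 1) hbc'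
    rw [hcast] at hB
    have hAeq : !![A 0 0, A 0 1; A 1 0, -A 0 0] = A := by
      ext i j; fin_cases i <;> fin_cases j <;> simp [hd]
    rw [hAeq] at hB
    exact ⟨B, hBdet, Or.inl hB⟩
end

section
/- Let A be a 2×2 integer matrix with determinant 1 and trace 1, and let S₃ = [[1, −1], [1, 0]]. Then there exists a 2×2 integer matrix B with determinant 1 such that B·A·B⁻¹ equals one of S₃, −S₃, S₃⁻¹, or −S₃⁻¹. -/
namespace ConjS3

/-- The target property: conjugate (by an `SL₂(ℤ)` matrix) to `±S₃` or `±S₃⁻¹`. -/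
def Good (A : Matrix (Fin 2) (Fin 2) ℤ) : Prop :=
  ∃ B : Matrix (Fin 2) (Fin 2) ℤ, B.det = 1 ∧
      (B * A * B⁻¹ = !![(1 : ℤ), -1; 1, 0] ∨
       B * A * B⁻¹ = -!![(1 : ℤ), -1; 1, 0] ∨
       B * A * B⁻¹ = (!![(1 : ℤ), -1; 1, 0])⁻¹ ∨
       B * A * B⁻¹ = -(!![(1 : ℤ), -1; 1, 0])⁻¹)

lemma conj_eq {B A C : Matrix (Fin 2) (Fin 2) ℤ} (hB : B.det = 1) (h : B * A = C * B) :
    B * A * B⁻¹ = C := by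
  have hinv : B * B⁻¹ = 1 := Matrix.mul_nonsing_inv B (by simp [hB])
  calc B * A * B⁻¹ = C * (B * B⁻¹) := by rw [h, Matrix.mul_assoc]
    _ = C := by rw [hinv, Matrix.mul_one]

lemma good_conj {U A : Matrix (Fin 2) (Fin 2) ℤ} (hU : U.det = 1)
    (h : Good (U * A * U⁻¹)) : Good A := by
  obtain ⟨B, hB, hres⟩ := h
  refine ⟨B * U, by simp [Matrix.det_mul, hB, hU], ?_⟩
  have key : B * U * A * (B * U)⁻¹ = B * (U * A * U⁻¹) * B⁻¹ := by
    rw [Matrix.mul_inv_rev]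
    simp only [Matrix.mul_assoc]
  rw [key]; exact hres

lemma exists_reduce (c : ℤ) (hc : c ≠ 0) :
    ∀ m : ℕ, ∀ r : ℤ, r.natAbs ≤ m → ∃ n : ℤ, (r + 2 * n * c).natAbs ≤ c.natAbs := by
  intro m
  induction m with
  | zero =>
    intro r h
    exact ⟨0, by simp; omega⟩
  | succ m ih =>
    intro r h
    by_cases hle : r.natAbs ≤ c.natAbs
    · exact ⟨0, by simpa using hle⟩
    · push_neg at hle
      rcases lt_trichotomy r 0 with hr | hr | hr
      · rcases hc.lt_or_gt with hcc | hcc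
        · -- r < 0, c < 0 : use r - 2c then shift
          obtain ⟨n, hn⟩ := ih (r - 2 * c) (by omega)
          refine ⟨n - 1, ?_⟩
          have : r + 2 * (n - 1) * c = r - 2 * c + 2 * n * c := by ring
          rw [this]; exact hn
        · obtain ⟨n, hn⟩ := ih (r + 2 * c) (by omega)
          refine ⟨n + 1, ?_⟩
          have : r + 2 * (n + 1) * c = r + 2 * c + 2 * n * c := by ring
          rw [this]; exact hn
      · omega
      · rcases hc.lt_or_gt with hcc | hcc
        · obtain ⟨n, hn⟩ := ih (r + 2 * c) (by omega)
          refine ⟨n + 1, ?_⟩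
          have : r + 2 * (n + 1) * c = r + 2 * c + 2 * n * c := by ring
          rw [this]; exact hn
        · obtain ⟨n, hn⟩ := ih (r - 2 * c) (by omega)
          refine ⟨n - 1, ?_⟩
          have : r + 2 * (n - 1) * c = r - 2 * c + 2 * n * c := by ring
          rw [this]; exact hn

lemma sq_le_of_natAbs_le {a b : ℤ} (h : a.natAbs ≤ b.natAbs) : a ^ 2 ≤ b ^ 2 := by
  have h2 : ((a.natAbs : ℤ)) ^ 2 ≤ ((b.natAbs : ℤ)) ^ 2 := by
    exact_mod_cast Nat.pow_le_pow_left h 2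
  rwa [Int.natAbs_sq, Int.natAbs_sq] at h2

set_option maxHeartbeats 2000000 in
lemma main : ∀ N : ℕ, ∀ a b c d : ℤ, a * d - b * c = 1 → a + d = 1 → c.natAbs ≤ N →
    Good !![a, b; c, d] := by
  intro N
  induction N using Nat.strong_induction_on with
  | _ N ih =>
  intro a b c d hdet htr hN
  have hc : c ≠ 0 := by
    intro h
    subst h
    have hd : d = 1 - a := by linarith
    rw [hd] at hdet
    nlinarith [sq_nonneg (2 * a - 1)]
  obtain ⟨n, hn⟩ := exists_reduce c hc (a - d).natAbs (a - d) le_rfl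
  set a' := a + n * c with ha'
  set d' := d - n * c with hd'
  set b' := b + n * (d - a) - n ^ 2 * c with hb'
  have hUdet : (!![(1 : ℤ), n; 0, 1]).det = 1 := by simp [Matrix.det_fin_two_of]
  apply good_conj hUdet
  have hcomm : !![(1 : ℤ), n; 0, 1] * !![a, b; c, d] = !![a', b'; c, d'] * !![(1 : ℤ), n; 0, 1] := by
    ext i j
    fin_cases i <;> fin_cases j <;>
      simp [Matrix.mul_apply, Fin.sum_univ_succ, ha', hb', hd'] <;> ring
  rw [conj_eq hUdet hcomm]
  have hdet' : a' * d' - b' * c = 1 := by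
    rw [ha', hd', hb']; linear_combination hdet
  have htr' : a' + d' = 1 := by rw [ha', hd']; linear_combination htr
  have hs : (a' - d').natAbs ≤ c.natAbs := by
    have e : a' - d' = a - d + 2 * n * c := by rw [ha', hd']; ring
    rw [e]; exact hn
  clear_value a' d' b'
  clear ha' hd' hb' hdet htr hn hcomm hUdet
  by_cases hb : b'.natAbs < c.natAbs
  · -- conjugate by S and use strong induction
    have hSdet : (!![(0 : ℤ), -1; 1, 0]).det = 1 := by simp [Matrix.det_fin_two_of]
    apply good_conj hSdet
    have hcommS : !![(0 : ℤ), -1; 1, 0] * !![a', b'; c, d'] =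
        !![d', -c; -b', a'] * !![(0 : ℤ), -1; 1, 0] := by
      ext i j
      fin_cases i <;> fin_cases j <;>
        simp [Matrix.mul_apply, Fin.sum_univ_succ]
    rw [conj_eq hSdet hcommS]
    exact ih b'.natAbs (by omega) d' (-c) (-b') a'
      (by linear_combination hdet') (by linarith) (by simp)
  · -- terminal case
    push_neg at hb
    have key : -4 * (b' * c) = 3 + (a' - d') ^ 2 := by
      linear_combination 4 * hdet' - (a' + d' + 1) * htr'
    have sq1 : (a' - d') ^ 2 ≤ c ^ 2 := sq_le_of_natAbs_le hs
    have sq2 : c ^ 2 ≤ b' ^ 2 := sq_le_of_natAbs_le hb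
    have hc1 : 1 ≤ c ^ 2 := by
      rcases hc.lt_or_gt with h | h <;> nlinarith
    have e1 : 16 * (b' ^ 2 * c ^ 2) = (3 + (a' - d') ^ 2) ^ 2 := by
      have : (-4 * (b' * c)) ^ 2 = (3 + (a' - d') ^ 2) ^ 2 := by rw [key]
      linear_combination this
    have e2 : 16 * (c ^ 2 * c ^ 2) ≤ 16 * (b' ^ 2 * c ^ 2) := by nlinarith [sq_nonneg c]
    have e3 : (3 + (a' - d') ^ 2) ^ 2 ≤ (3 + c ^ 2) ^ 2 := by
      nlinarith [sq_nonneg (a' - d'), sq_nonneg c]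
    have hcle : c ^ 2 ≤ 1 := by nlinarith [sq_nonneg (c ^ 2 - 1)]
    have hcsq : c ^ 2 = 1 := le_antisymm hcle hc1
    have hble : b' ^ 2 ≤ 1 := by nlinarith [sq_nonneg (a' - d')]
    have hbsq : b' ^ 2 = 1 := le_antisymm hble (by linarith)
    have hssq : (a' - d') ^ 2 = 1 := by nlinarith [sq_nonneg (a' - d')]
    have hbc : b' * c = -1 := by linarith [key, hssq]
    have hcval : c = 1 ∨ c = -1 := by
      have : (c - 1) * (c + 1) = 0 := by linear_combination hcsq
      rcases mul_eq_zero.mp this with h | h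
      · left; linarith
      · right; linarith
    have hsval : a' - d' = 1 ∨ a' - d' = -1 := by
      have : (a' - d' - 1) * (a' - d' + 1) = 0 := by linear_combination hssq
      rcases mul_eq_zero.mp this with h | h
      · left; linarith
      · right; linarith
    have hSinv : (!![(1 : ℤ), -1; 1, 0])⁻¹ = !![0, 1; -1, 1] := by
      apply Matrix.inv_eq_right_inv
      ext i j
      fin_cases i <;> fin_cases j <;>
        simp [Matrix.mul_apply, Fin.sum_univ_succ, Matrix.one_apply]
    rcases hcval with hcv | hcv
    · have hbv : b' = -1 := by rw [hcv] at hbc; linarith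
      rcases hsval with hsv | hsv
      · have ha1 : a' = 1 := by linarith
        have hd1 : d' = 0 := by linarith
        rw [ha1, hd1, hbv, hcv]
        exact ⟨1, by simp, Or.inl (by simp)⟩
      · have ha1 : a' = 0 := by linarith
        have hd1 : d' = 1 := by linarith
        rw [ha1, hd1, hbv, hcv]
        refine ⟨!![1, 1; 0, 1], by simp [Matrix.det_fin_two_of], Or.inl ?_⟩
        apply conj_eq (by simp [Matrix.det_fin_two_of])
        ext i j
        fin_cases i <;> fin_cases j <;> simp [Matrix.mul_apply, Fin.sum_univ_succ]
    · have hbv : b' = 1 := by rw [hcv] at hbc; linarith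
      rcases hsval with hsv | hsv
      · have ha1 : a' = 1 := by linarith
        have hd1 : d' = 0 := by linarith
        rw [ha1, hd1, hbv, hcv]
        refine ⟨!![1, 1; 0, 1], by simp [Matrix.det_fin_two_of],
          Or.inr (Or.inr (Or.inl ?_))⟩
        rw [hSinv]
        apply conj_eq (by simp [Matrix.det_fin_two_of])
        ext i j
        fin_cases i <;> fin_cases j <;> simp [Matrix.mul_apply, Fin.sum_univ_succ]
      · have ha1 : a' = 0 := by linarith
        have hd1 : d' = 1 := by linarith
        rw [ha1, hd1, hbv, hcv]
        exact ⟨1, by simp, Or.inr (Or.inr (Or.inl (by rw [hSinv]; simp)))⟩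

end ConjS3

theorem conjugate_to_S3 (A : Matrix (Fin 2) (Fin 2) ℤ)
    (hdet : A.det = 1) (htr : A.trace = 1) :
    ∃ B : Matrix (Fin 2) (Fin 2) ℤ, B.det = 1 ∧
      (B * A * B⁻¹ = !![(1 : ℤ), -1; 1, 0] ∨
       B * A * B⁻¹ = -!![(1 : ℤ), -1; 1, 0] ∨
       B * A * B⁻¹ = (!![(1 : ℤ), -1; 1, 0])⁻¹ ∨
       B * A * B⁻¹ = -(!![(1 : ℤ), -1; 1, 0])⁻¹) := by
  have hA : A = !![A 0 0, A 0 1; A 1 0, A 1 1] := by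
    rw [← Matrix.eta_fin_two A]
  rw [Matrix.det_fin_two] at hdet
  rw [Matrix.trace_fin_two] at htr
  have := ConjS3.main (A 1 0).natAbs (A 0 0) (A 0 1) (A 1 0) (A 1 1)
    (by linarith) htr le_rfl
  rw [hA]
  exact this
end

section
/- Let p be a prime with p ≡ 1 (mod 3), let m be an integer with p dividing m² + m + 1, set r = (m² + m + 1)/p, and let E = [[1 + m, −r], [p, −m]]. Then there exist integers c and d such that p = c² + c·d + d². -/
/-- Thue-style lemma: find small `a, b` with `a ≡ m * b mod p`. -/
lemma exists_small_rep (p : ℕ) (hp : 0 < p) (m : ℤ) :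
    ∃ a b : ℤ, (¬ (a = 0 ∧ b = 0)) ∧ a ^ 2 ≤ (Nat.sqrt p : ℤ) ^ 2 ∧
      b ^ 2 ≤ (Nat.sqrt p : ℤ) ^ 2 ∧ (p : ℤ) ∣ a - m * b := by
  haveI : NeZero p := ⟨hp.ne'⟩
  set k := Nat.sqrt p with hk
  have hcard : Fintype.card (ZMod p) < Fintype.card (Fin (k + 1) × Fin (k + 1)) := by
    simp only [ZMod.card, Fintype.card_prod, Fintype.card_fin]
    have := Nat.lt_succ_sqrt p
    nlinarith [Nat.lt_succ_sqrt p]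
  obtain ⟨x, y, hxy, hfeq⟩ := Fintype.exists_ne_map_eq_of_card_lt
    (fun z : Fin (k + 1) × Fin (k + 1) => ((z.1 : ℤ) - m * (z.2 : ℤ) : ZMod p)) hcard
  refine ⟨(x.1 : ℤ) - (y.1 : ℤ), (x.2 : ℤ) - (y.2 : ℤ), ?_, ?_, ?_, ?_⟩
  · rintro ⟨h1, h2⟩
    apply hxy
    have e1 : (x.1 : ℤ) = (y.1 : ℤ) := by omega
    have e2 : (x.2 : ℤ) = (y.2 : ℤ) := by omega
    have : x.1 = y.1 := by exact_mod_cast Fin.val_injective (by exact_mod_cast e1)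
    have : x.2 = y.2 := by exact_mod_cast Fin.val_injective (by exact_mod_cast e2)
    exact Prod.ext ‹x.1 = y.1› ‹x.2 = y.2›
  · have h1 : (x.1 : ℤ) ≤ k := by exact_mod_cast Nat.lt_succ_iff.mp x.1.isLt
    have h2 : (y.1 : ℤ) ≤ k := by exact_mod_cast Nat.lt_succ_iff.mp y.1.isLt
    have h3 : (0 : ℤ) ≤ (x.1 : ℤ) := Int.natCast_nonneg _
    have h4 : (0 : ℤ) ≤ (y.1 : ℤ) := Int.natCast_nonneg _
    nlinarith
  · have h1 : (x.2 : ℤ) ≤ k := by exact_mod_cast Nat.lt_succ_iff.mp x.2.isLt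
    have h2 : (y.2 : ℤ) ≤ k := by exact_mod_cast Nat.lt_succ_iff.mp y.2.isLt
    have h3 : (0 : ℤ) ≤ (x.2 : ℤ) := Int.natCast_nonneg _
    have h4 : (0 : ℤ) ≤ (y.2 : ℤ) := Int.natCast_nonneg _
    nlinarith
  · have : ((((x.1 : ℤ) - (y.1 : ℤ)) - m * ((x.2 : ℤ) - (y.2 : ℤ)) : ℤ) : ZMod p) = 0 := by
      push_cast
      rw [sub_eq_zero]
      push_cast at hfeq
      ring_nf
      ring_nf at hfeq
      linear_combination hfeq
    exact (ZMod.intCast_zmod_eq_zero_iff_dvd _ _).mp this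

theorem fermat_B_group (p : ℕ) (hp : p.Prime) (h : p % 3 = 1) (m r : ℤ)
    (hdvd : (p : ℤ) ∣ m ^ 2 + m + 1) (hr : r = (m ^ 2 + m + 1) / (p : ℤ))
    (E : Matrix (Fin 2) (Fin 2) ℤ) (hE : E = !![1 + m, -r; (p : ℤ), -m]) :
    ∃ c d : ℤ, (p : ℤ) = c ^ 2 + c * d + d ^ 2 := by
  obtain ⟨a, b, hne, ha, hb, hab⟩ := exists_small_rep p hp.pos m
  set N : ℤ := a ^ 2 + a * b + b ^ 2 with hN
  have hdN : (p : ℤ) ∣ N := by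
    have : N = (a - m * b) * (a + m * b + b) + b ^ 2 * (m ^ 2 + m + 1) := by ring
    rw [this]
    exact dvd_add (hab.mul_right _) (Dvd.dvd.mul_left hdvd _)
  have hpos : 0 < N := by
    rcases not_and_or.mp hne with h' | h'
    · have h1 : 1 ≤ a ^ 2 := by rcases lt_or_gt_of_ne h' with hlt | hlt <;> nlinarith
      nlinarith [sq_nonneg (a + 2 * b)]
    · have h1 : 1 ≤ b ^ 2 := by rcases lt_or_gt_of_ne h' with hlt | hlt <;> nlinarith
      nlinarith [sq_nonneg (b + 2 * a)]
  -- p is not a perfect square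
  have hsq : (Nat.sqrt p : ℤ) ^ 2 < (p : ℤ) := by
    have h1 : Nat.sqrt p * Nat.sqrt p ≤ p := Nat.sqrt_le p
    have h2 : Nat.sqrt p * Nat.sqrt p ≠ p := by
      intro he
      have h2 := hp.two_le
      have : Nat.sqrt p ∣ p := ⟨Nat.sqrt p, he.symm⟩
      rcases (Nat.Prime.eq_one_or_self_of_dvd hp _ this) with h3 | h3
      · rw [h3] at he; omega
      · nlinarith [hp.two_le]
    have : Nat.sqrt p * Nat.sqrt p < p := lt_of_le_of_ne h1 h2
    push_cast
    nlinarith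
  have hlt : N < 3 * (p : ℤ) := by nlinarith
  have hp0 : (0 : ℤ) < (p : ℤ) := by exact_mod_cast hp.pos
  have hpodd : p % 2 = 1 := by
    have : ¬ Even p := by rw [Nat.Prime.even_iff hp]; omega
    exact Nat.odd_iff.mp (Nat.not_even_iff_odd.mp this)
  obtain ⟨q, hq⟩ := hdN
  have hq1 : 0 < q := by nlinarith
  have hq3 : q < 3 := by nlinarith
  interval_cases q
  · exact ⟨a, b, by linarith⟩
  · exfalso
    rcases Int.even_or_odd a with ⟨u, hu⟩ | ⟨u, hu⟩ <;>
      rcases Int.even_or_odd b with ⟨v, hv⟩ | ⟨v, hv⟩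
    · have hK : (p : ℤ) = 2 * (u ^ 2 + u * v + v ^ 2) := by
        have : N = 4 * (u ^ 2 + u * v + v ^ 2) := by rw [hN, hu, hv]; ring
        linarith
      omega
    · have : N = 2 * (2 * u ^ 2 + 2 * u * v + u + 2 * v ^ 2 + 2 * v) + 1 := by
        rw [hN, hu, hv]; ring
      omega
    · have : N = 2 * (2 * u ^ 2 + 2 * u * v + v + 2 * v ^ 2 + 2 * u) + 1 := by
        rw [hN, hu, hv]; ring
      omega
    · have : N = 2 * (2 * u ^ 2 + 2 * u * v + 2 * v ^ 2 + 3 * u + 3 * v + 1) + 1 := by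
        rw [hN, hu, hv]; ring
      omega
end

section
/- Let p be a prime number. Then p ≡ 1 (mod 3) implies there exist integers c and d with p = c² + c·d + d², and consequently there exist integers X and Y with p = X² + 3Y². -/
-- Step 1: there is a square root of -3 mod p
lemma exists_sqrt_neg_three (p : ℕ) (hp : p.Prime) (h3 : p % 3 = 1) :
    ∃ a : ZMod p, a ^ 2 = -3 := by
  haveI : Fact p.Prime := ⟨hp⟩
  have hdvd : 3 ∣ Fintype.card (ZMod p)ˣ := by
    rw [ZMod.card_units_eq_totient, Nat.totient_prime hp]
    omega
  obtain ⟨u, hu⟩ := exists_prime_orderOf_dvd_card 3 hdvd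
  set b : ZMod p := (u : ZMod p) with hb
  have hb3 : b ^ 3 = 1 := by
    have : u ^ 3 = 1 := by rw [← hu]; exact pow_orderOf_eq_one u
    have := congrArg (Units.val) this
    push_cast at this
    simpa [hb] using this
  have hbne : b ≠ 1 := by
    intro h
    have : u = 1 := Units.ext (by simpa [hb] using h)
    rw [this] at hu
    simp at hu
  have key : b ^ 2 + b + 1 = 0 := by
    have hfac : (b - 1) * (b ^ 2 + b + 1) = 0 := by
      have : (b - 1) * (b ^ 2 + b + 1) = b ^ 3 - 1 := by ring
      rw [this, hb3, sub_self]
    rcases mul_eq_zero.mp hfac with h | h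
    · exact absurd (sub_eq_zero.mp h) hbne
    · exact h
  refine ⟨2 * b + 1, ?_⟩
  have : (2 * b + 1) ^ 2 = 4 * (b ^ 2 + b + 1) - 3 := by ring
  rw [this, key]; ring

-- Step 2: main representation lemma
lemma exists_rep (p : ℕ) (hp : p.Prime) (h3 : p % 3 = 1) :
    ∃ X Y : ℤ, (p : ℤ) = X ^ 2 + 3 * Y ^ 2 := by
  haveI : Fact p.Prime := ⟨hp⟩
  obtain ⟨a, ha⟩ := exists_sqrt_neg_three p hp h3
  set n := Nat.sqrt p with hn
  have hp2 := hp.two_le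
  have hp7 : 7 ≤ p := by
    have h4 : p = 4 ∨ 7 ≤ p := by omega
    rcases h4 with rfl | h
    · norm_num at hp
    · exact h
  have hnp : n ^ 2 < p := by
    have h1 : n ^ 2 ≤ p := Nat.sqrt_le' p
    rcases eq_or_lt_of_le h1 with h | h
    · exfalso
      have hdvd : n ∣ p := ⟨n, by rw [← h]; ring⟩
      rcases hp.eq_one_or_self_of_dvd n hdvd with h' | h'
      · rw [h'] at h; norm_num at h; omega
      · rw [h'] at h; nlinarith
    · exact h
  have hcard : Fintype.card (ZMod p) < Fintype.card (Fin (n + 1) × Fin (n + 1)) := by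
    rw [ZMod.card]
    simp only [Fintype.card_prod, Fintype.card_fin]
    rw [show (n + 1) * (n + 1) = (n + 1) ^ 2 by ring]
    exact Nat.lt_succ_sqrt' p
  obtain ⟨q1, q2, hne, heq⟩ :=
    Fintype.exists_ne_map_eq_of_card_lt
      (fun q : Fin (n + 1) × Fin (n + 1) => ((q.1 : ℕ) : ZMod p) - a * ((q.2 : ℕ) : ZMod p))
      hcard
  set x : ℤ := (q1.1 : ℕ) - ((q2.1 : ℕ) : ℤ) with hx
  set y : ℤ := (q1.2 : ℕ) - ((q2.2 : ℕ) : ℤ) with hy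
  have hxy0 : x ≠ 0 ∨ y ≠ 0 := by
    by_contra h
    push_neg at h
    apply hne
    have h1 : (q1.1 : ℕ) = (q2.1 : ℕ) := by omega
    have h2 : (q1.2 : ℕ) = (q2.2 : ℕ) := by omega
    ext <;> simp [h1, h2]
  have hcong : ((x : ZMod p)) = a * (y : ZMod p) := by
    have : ((q1.1 : ℕ) : ZMod p) - a * ((q1.2 : ℕ) : ZMod p)
         = ((q2.1 : ℕ) : ZMod p) - a * ((q2.2 : ℕ) : ZMod p) := heq
    push_cast [hx, hy]
    linear_combination this
  have hxb : x ^ 2 ≤ (n : ℤ) ^ 2 := by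
    have h1 : (q1.1 : ℕ) ≤ n := Nat.lt_succ_iff.mp q1.1.isLt
    have h2 : (q2.1 : ℕ) ≤ n := Nat.lt_succ_iff.mp q2.1.isLt
    have hl : -(n : ℤ) ≤ x := by omega
    have hr : x ≤ (n : ℤ) := by omega
    nlinarith
  have hyb : y ^ 2 ≤ (n : ℤ) ^ 2 := by
    have h1 : (q1.2 : ℕ) ≤ n := Nat.lt_succ_iff.mp q1.2.isLt
    have h2 : (q2.2 : ℕ) ≤ n := Nat.lt_succ_iff.mp q2.2.isLt
    have hl : -(n : ℤ) ≤ y := by omega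
    have hr : y ≤ (n : ℤ) := by omega
    nlinarith
  set N : ℤ := x ^ 2 + 3 * y ^ 2 with hN
  have hNpos : 0 < N := by
    rcases hxy0 with h | h <;> positivity
  have hNlt : N < 4 * p := by
    have : (n : ℤ) ^ 2 < p := by exact_mod_cast hnp
    nlinarith
  have hpd : (p : ℤ) ∣ N := by
    have : ((N : ℤ) : ZMod p) = 0 := by
      push_cast [hN]
      rw [hcong]
      have : a ^ 2 * (y : ZMod p) ^ 2 + 3 * (y : ZMod p) ^ 2 = (a ^ 2 + 3) * (y : ZMod p) ^ 2 := by
        ring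
      rw [show (a * (y : ZMod p)) ^ 2 = a ^ 2 * (y:ZMod p) ^ 2 by ring, this, ha]
      ring
    exact_mod_cast (ZMod.intCast_zmod_eq_zero_iff_dvd N p).mp (by exact_mod_cast this)
  obtain ⟨m, hm⟩ := hpd
  have hppos : (0 : ℤ) < p := by exact_mod_cast hp.pos
  have hm13 : m = 1 ∨ m = 2 ∨ m = 3 := by
    have h1 : 0 < m := by nlinarith
    have h2 : m < 4 := by nlinarith
    omega
  rcases hm13 with rfl | rfl | rfl
  · exact ⟨x, y, by linarith [hm]⟩
  · -- impossible: x² + 3y² = 2p with p odd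
    exfalso
    have hpodd : p % 2 = 1 := by
      rcases hp.eq_two_or_odd with h | h
      · omega
      · exact h
    set qx := x / 2 with hqx
    set rx := x % 2 with hrx0
    set qy := y / 2 with hqy
    set ry := y % 2 with hry0
    have hxe : x = 2 * qx + rx := by omega
    have hye : y = 2 * qy + ry := by omega
    have hx2 : x ^ 2 = 4 * (qx ^ 2 + qx * rx) + rx ^ 2 := by
      linear_combination (x + 2 * qx + rx) * hxe
    have hy2 : y ^ 2 = 4 * (qy ^ 2 + qy * ry) + ry ^ 2 := by
      linear_combination (y + 2 * qy + ry) * hye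
    have hrx : rx = 0 ∨ rx = 1 := by omega
    have hry : ry = 0 ∨ ry = 1 := by omega
    have hNe : x ^ 2 + 3 * y ^ 2 = (p : ℤ) * 2 := hm
    rw [hx2, hy2] at hNe
    rcases hrx with h1 | h1 <;> rcases hry with h2 | h2 <;> rw [h1, h2] at hNe <;> omega
  · -- N = 3p ⇒ 3 ∣ x, descend
    have h3x : (3 : ℤ) ∣ x := by
      have h3N : (3 : ℤ) ∣ x ^ 2 := ⟨(p : ℤ) - y ^ 2, by linarith [hm]⟩
      exact Int.Prime.dvd_pow' (by norm_num) h3N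
    obtain ⟨z, hz⟩ := h3x
    refine ⟨y, z, ?_⟩
    have : 9 * z ^ 2 + 3 * y ^ 2 = (p : ℤ) * 3 := by rw [← hm, hN, hz]; ring
    linarith

theorem fermat_B_combined (p : ℕ) (hp : p.Prime) :
    p % 3 = 1 →
      (∃ c d : ℤ, (p : ℤ) = c ^ 2 + c * d + d ^ 2) ∧
      (∃ X Y : ℤ, (p : ℤ) = X ^ 2 + 3 * Y ^ 2) := by
  intro h3
  obtain ⟨X, Y, hXY⟩ := exists_rep p hp h3
  refine ⟨⟨X - Y, 2 * Y, ?_⟩, ⟨X, Y, hXY⟩⟩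
  rw [hXY]; ring
end
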